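/- Let p be a prime, m ≥ 1, n = m − 1, and k ≥ 1. Let χ1,…,χk be primitive characters mod p^m and suppose χ1⋯χk is induced by a character ψ mod p. Then |J_{p^{m−1}}(χ1,…,χk,p^m)| = p^{mk/2 − 1} if ψ is the principal character mod p, and |J_{p^{m−1}}(χ1,…,χk,p^m)| = p^{(mk−1)/2} otherwise. -/

import Mathlib

/-!
Detecting `x₁ + ⋯ + x_k = B` by orthogonality of additive characters mod `N = p^m` turns the
Jacobi sum into `N⁻¹ ∑ₜ e(-tB) ∏ᵢ 𝓕χᵢ(-t)`. For primitive `χᵢ` the Fourier transform is `χᵢ⁻¹ · g(χᵢ)`, so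
`J_B = N⁻¹ ∏ᵢ g(χᵢ) · 𝓕(χ⁻¹)(B)` with `χ = ∏ᵢ χᵢ`, and Fourier inversion gives
`|g(χᵢ)| = p^{m/2}`.
When `χ` is induced from `ψ` mod `p` and `B = p^{m-1}`, the sum `𝓕(χ⁻¹)(B)` only sees residues
mod `p`, so it equals `p^{m-1} · 𝓕(ψ⁻¹)(1)`: a Gauss sum mod `p`, of absolute value `1` if `ψ`
is trivial and `√p` otherwise.
-/

open Complex

/-- The generalized Jacobi sum `J_B(χ₁,…,χ_k, q)`. -/
noncomputable def Jsum {q : ℕ} [NeZero q] {k : ℕ}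
    (χ : Fin k → DirichletCharacter ℂ q) (B : ZMod q) : ℂ :=
  ∑ x : Fin k → ZMod q, if (∑ i, x i) = B then ∏ i, χ i (x i) else 0

open Finset ZMod DirichletCharacter

lemma AddChar.map_sum_eq_prod {A M ι : Type*} [AddCommMonoid A] [CommMonoid M]
    (ψ : AddChar A M) (s : Finset ι) (f : ι → A) : ψ (∑ i ∈ s, f i) = ∏ i ∈ s, ψ (f i) := by
  classical
  induction s using Finset.induction_on with
  | empty => simp
  | insert _ _ h ih => rw [sum_insert h, prod_insert h, map_add_eq_mul, ih]

lemma MulChar.prod_apply {R R' ι : Type*} [CommMonoid R] [CommMonoidWithZero R']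
    {s : Finset ι} (hs : s.Nonempty) (χ : ι → MulChar R R') (a : R) :
    (∏ i ∈ s, χ i) a = ∏ i ∈ s, χ i a := by
  induction hs using Finset.Nonempty.cons_induction with
  | singleton => simp
  | cons _ _ _ _ ih => rw [prod_cons, prod_cons, MulChar.mul_apply, ih]

namespace ZMod

lemma stdAddChar_mul_natCast {N d e : ℕ} [NeZero N] [NeZero d] (hN : N = d * e)
    (t : ZMod N) : stdAddChar (t * (e : ZMod N)) = stdAddChar (cast t : ZMod d) := by
  obtain ⟨j, rfl⟩ := intCast_surjective t
  have he : (e : ℂ) ≠ 0 := by exact_mod_cast right_ne_zero_of_mul (hN ▸ NeZero.ne N)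
  rw [cast_intCast (hN ▸ dvd_mul_right d e), ← Int.cast_natCast, ← Int.cast_mul,
    stdAddChar_coe, stdAddChar_coe, hN]
  congr 1
  push_cast
  field_simp

lemma sum_cast_eq_smul_sum {M : Type*} [AddCommMonoid M] {N d : ℕ} [NeZero N] [NeZero d]
    (h : d ∣ N) (f : ZMod d → M) : ∑ t : ZMod N, f (cast t) = (N / d) • ∑ a, f a := by
  classical
  set π := castHom h (ZMod d)
  have hfiber (a : ZMod d) : #{t | π t = a} = #{t | π t = 0} :=
    AddMonoidHom.card_fiber_eq_of_mem_range π (castHom_surjective h a) (castHom_surjective h 0)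
  have hcard : N = d * #{t | π t = 0} := by
    simpa [hfiber, ZMod.card] using
      card_eq_sum_card_fiberwise (s := univ) (t := univ) (f := π) fun _ _ ↦ mem_univ _
  change ∑ t, f (π t) = _
  rw [sum_comp, image_univ_of_surjective (castHom_surjective h), smul_sum]
  refine sum_congr rfl fun a _ ↦ ?_
  rw [hfiber, Nat.eq_div_of_mul_eq_right (NeZero.ne d) hcard.symm]

lemma isUnit_of_isUnit_cast_pow {n m : ℕ} [NeZero (n ^ m)] (hm : m ≠ 0) {t : ZMod (n ^ m)}
    (ht : IsUnit (cast t : ZMod n)) : IsUnit t := by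
  rw [← natCast_zmod_val t, cast_natCast (dvd_pow_self n hm), isUnit_iff_coprime] at ht
  rw [← natCast_zmod_val t, isUnit_iff_coprime]
  exact ht.pow_right m

end ZMod

namespace DirichletCharacter

lemma IsPrimitive.inv {R : Type*} [CommMonoidWithZero R] {N : ℕ} {χ : DirichletCharacter R N}
    (hχ : IsPrimitive χ) : IsPrimitive χ⁻¹ := by
  rwa [isPrimitive_def, conductor_inv]

lemma isPrimitive_of_ne_one {R : Type*} [CommMonoidWithZero R] {p : ℕ} [NeZero p]
    (hp : p.Prime) {ψ : DirichletCharacter R p} (hψ : ψ ≠ 1) : IsPrimitive ψ :=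
  (hp.eq_one_or_self_of_dvd _ (conductor_dvd_level ψ)).resolve_left
    fun h ↦ hψ (eq_one_iff_conductor_eq_one.mpr h)

lemma changeLevel_pow_apply {R : Type*} [CommMonoidWithZero R] {n m : ℕ} [NeZero (n ^ m)]
    (hm : m ≠ 0) (h : n ∣ n ^ m) (ψ : DirichletCharacter R n) (t : ZMod (n ^ m)) :
    changeLevel h ψ t = ψ (cast t) := by
  by_cases ht : IsUnit t
  · simpa using changeLevel_eq_cast_of_dvd ψ h ht.unit
  · rw [MulChar.map_nonunit _ ht, MulChar.map_nonunit _ (mt (isUnit_of_isUnit_cast_pow hm) ht)]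

variable {N : ℕ} [NeZero N]

lemma IsPrimitive.gaussSum_mul_star {χ : DirichletCharacter ℂ N} (hχ : IsPrimitive χ) :
    gaussSum χ stdAddChar * star (gaussSum χ stdAddChar) = N := by
  have hstar : star (gaussSum χ stdAddChar) = gaussSum χ⁻¹ stdAddChar * χ (-1) := by
    rw [star_gaussSum_eq, AddChar.inv_mulShift, gaussSum_mulShift_of_isPrimitive _ hχ.inv,
      inv_inv, mul_comm]
  have hdft : 𝓕 χ = fun k ↦ (fun j ↦ χ⁻¹ (-j)) k * gaussSum χ stdAddChar :=
    funext hχ.fourierTransform_eq_inv_mul_gaussSum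
  -- Fourier inversion applied to `𝓕 χ = g(χ) • χ⁻¹ (-·)` gives `g(χ) g(χ⁻¹) χ(-1) = N`.
  have h := congrFun (dft_dft (χ : ZMod N → ℂ)) (-1)
  simp only [hdft, dft_mul_const, dft_comp_neg, hχ.inv.fourierTransform_eq_inv_mul_gaussSum] at h
  simpa [hstar, mul_comm] using h

lemma IsPrimitive.norm_gaussSum {χ : DirichletCharacter ℂ N} (hχ : IsPrimitive χ) :
    ‖gaussSum χ stdAddChar‖ = √N := by
  have hsq : ((‖gaussSum χ stdAddChar‖ ^ 2 : ℝ) : ℂ) = N := by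
    push_cast
    rw [← Complex.mul_conj', starRingEnd_apply, hχ.gaussSum_mul_star]
  rw [← Real.sqrt_sq (norm_nonneg _)]
  exact congrArg Real.sqrt (by exact_mod_cast hsq)

lemma dft_changeLevel_pow {n m : ℕ} [NeZero n] [NeZero (n ^ m)] (hm : m ≠ 0) (h : n ∣ n ^ m)
    (ψ : DirichletCharacter ℂ n) :
    𝓕 (changeLevel h ψ) ((n ^ (m - 1) : ℕ) : ZMod (n ^ m)) = (n ^ (m - 1) : ℕ) * 𝓕 ψ 1 := by
  have hN : n ^ m = n * n ^ (m - 1) := by rw [← pow_succ']; congr; omega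
  have he (t : ZMod (n ^ m)) : stdAddChar (-(t * ((n ^ (m - 1) : ℕ) : ZMod (n ^ m)))) =
      stdAddChar (-(cast t * 1) : ZMod n) := by
    rw [← neg_mul, stdAddChar_mul_natCast hN, cast_neg h, mul_one]
  simp_rw [dft_apply, he, changeLevel_pow_apply hm,
    sum_cast_eq_smul_sum h fun a ↦ stdAddChar (-(a * 1)) • ψ a, hN,
    Nat.mul_div_cancel_left _ (NeZero.pos n), nsmul_eq_mul]

lemma norm_dft_one_of_prime {p : ℕ} [Fact p.Prime] (ψ : DirichletCharacter ℂ p) :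
    ‖𝓕 ψ 1‖ = if ψ = 1 then 1 else √p := by
  split_ifs with hψ
  · have he : stdAddChar.mulShift (-1 : ZMod p) ≠ 1 :=
      isPrimitive_stdAddChar p (neg_ne_zero.mpr one_ne_zero)
    rw [fourierTransform_eq_gaussSum_mulShift, hψ, gaussSum_one_left he, norm_neg, norm_one]
  · have hprim := isPrimitive_of_ne_one Fact.out hψ
    have hunit : ‖ψ⁻¹ (-1)‖ = 1 := by simpa using ψ⁻¹.unit_norm_eq_one (-1)
    rw [hprim.fourierTransform_eq_inv_mul_gaussSum, norm_mul, hprim.norm_gaussSum, hunit,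
      one_mul]

end DirichletCharacter

section JacobiSum

variable {N : ℕ} [NeZero N]

lemma ite_eq_inv_mul_sum_stdAddChar (s B : ZMod N) :
    (if s = B then (1 : ℂ) else 0) =
      (N : ℂ)⁻¹ * ∑ t, stdAddChar (t * s) * stdAddChar (-(t * B)) := by
  simp_rw [← AddChar.map_add_eq_mul, ← mul_neg, ← mul_add, ← sub_eq_add_neg,
    AddChar.sum_mulShift _ (isPrimitive_stdAddChar N), sub_eq_zero, ZMod.card]
  split_ifs <;> simp

lemma jsum_eq_inv_mul_prod_gaussSum_mul_dft {k : ℕ}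
    (χ : Fin (k + 1) → DirichletCharacter ℂ N) (hχ : ∀ i, IsPrimitive (χ i)) (B : ZMod N) :
    Jsum χ B = (N : ℂ)⁻¹ * (∏ i, gaussSum (χ i) stdAddChar) * 𝓕 ⇑(∏ i, χ i)⁻¹ B := by
  calc Jsum χ B
      = ∑ x : Fin (k + 1) → ZMod N, (∏ i, χ i (x i)) *
          ((N : ℂ)⁻¹ * ∑ t, stdAddChar (t * ∑ i, x i) * stdAddChar (-(t * B))) := by
        simp_rw [← ite_eq_inv_mul_sum_stdAddChar, mul_ite, mul_one, mul_zero]; rfl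
    _ = (N : ℂ)⁻¹ * ∑ t, stdAddChar (-(t * B)) *
          ∏ i, ∑ x, stdAddChar (-(x * -t)) • χ i x := by
        simp_rw [Fintype.prod_sum, mul_sum]
        rw [sum_comm]
        refine sum_congr rfl fun t _ ↦ sum_congr rfl fun x _ ↦ ?_
        simp_rw [mul_neg, neg_neg, smul_eq_mul, prod_mul_distrib, AddChar.map_sum_eq_prod,
          mul_comm (x _) t]
        ring
    _ = (N : ℂ)⁻¹ * ∑ t, stdAddChar (-(t * B)) *
          ((∏ i, χ i)⁻¹ t * ∏ i, gaussSum (χ i) stdAddChar) := by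
        simp_rw [← smul_eq_mul (a := stdAddChar _), ← dft_apply,
          fun i ↦ (hχ i).fourierTransform_eq_inv_mul_gaussSum, neg_neg, prod_mul_distrib,
          ← prod_inv_distrib, MulChar.prod_apply univ_nonempty]
    _ = _ := by
        rw [dft_apply, mul_assoc, mul_sum, mul_sum, mul_sum]
        exact sum_congr rfl fun t _ ↦ by rw [smul_eq_mul]; ring

lemma norm_jsum_natCast_pow_pred {p m k : ℕ} [NeZero p] [NeZero (p ^ m)] (hm : m ≠ 0)
    (χ : Fin (k + 1) → DirichletCharacter ℂ (p ^ m)) (hχ : ∀ i, IsPrimitive (χ i))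
    {h : p ∣ p ^ m} {ψ : DirichletCharacter ℂ p} (hind : ∏ i, χ i = changeLevel h ψ) :
    ‖Jsum χ ((p ^ (m - 1) : ℕ) : ZMod (p ^ m))‖ = √p ^ (m * (k + 1)) / p * ‖𝓕 (⇑ψ⁻¹) 1‖ := by
  rw [jsum_eq_inv_mul_prod_gaussSum_mul_dft χ hχ, hind, ← map_inv, dft_changeLevel_pow hm]
  simp only [norm_mul, norm_inv, norm_prod, (hχ _).norm_gaussSum, prod_const, card_univ,
    Fintype.card_fin, Complex.norm_natCast]
  obtain ⟨n, rfl⟩ : ∃ n, m = n + 1 := ⟨m - 1, by omega⟩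
  have hp : (p : ℝ) = √p ^ 2 := (Real.sq_sqrt (Nat.cast_nonneg p)).symm
  have hsqrt : √((p : ℝ) ^ (n + 1)) = √p ^ (n + 1) := by
    rw [hp, ← pow_mul, pow_mul', Real.sqrt_sq (by positivity), ← hp]
  have hp0 : (p : ℝ) ≠ 0 := NeZero.ne _
  push_cast
  rw [hsqrt, ← pow_mul]
  field_simp
  ring

end JacobiSum

/-- The paper's `k` characters are `χ 0, …, χ (Fin.last k)`: its `k` is `k + 1` here. -/
theorem stmt16 {p m k : ℕ} [NeZero (p ^ m)]
    (hp : p.Prime) (hm : 1 ≤ m)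
    (χ : Fin (k + 1) → DirichletCharacter ℂ (p ^ m))
    (hprim : ∀ i, (χ i).IsPrimitive)
    (ψ : DirichletCharacter ℂ p)
    (hind : ∏ i, χ i = DirichletCharacter.changeLevel
      (dvd_pow_self p (Nat.one_le_iff_ne_zero.mp hm)) ψ) :
    (ψ = 1 →
      ‖Jsum χ ((p ^ (m - 1) : ℕ) : ZMod (p ^ m))‖ =
        (Real.sqrt p) ^ (m * (k + 1)) / p) ∧
    (ψ ≠ 1 →
      ‖Jsum χ ((p ^ (m - 1) : ℕ) : ZMod (p ^ m))‖ =
        (Real.sqrt p) ^ (m * (k + 1) - 1)) := by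
  have : Fact p.Prime := ⟨hp⟩
  rw [norm_jsum_natCast_pow_pred (by omega) χ hprim hind, norm_dft_one_of_prime]
  refine ⟨fun hψ ↦ by rw [if_pos (inv_eq_one.mpr hψ), mul_one], fun hψ ↦ ?_⟩
  obtain ⟨M, hM⟩ : ∃ M, m * (k + 1) = M + 1 :=
    Nat.exists_eq_add_one.mpr (Nat.mul_pos hm (Nat.succ_pos k))
  have hp0 : (p : ℝ) ≠ 0 := by exact_mod_cast hp.ne_zero
  calc √p ^ (m * (k + 1)) / p * (if ψ⁻¹ = 1 then 1 else √p) = √p ^ M * (√p * √p) / p := by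
        rw [if_neg (mt inv_eq_one.mp hψ), hM]; ring
    _ = √p ^ (m * (k + 1) - 1) := by
        rw [Real.mul_self_sqrt (Nat.cast_nonneg _), mul_div_cancel_right₀ _ hp0, hM,
          Nat.add_sub_cancel]
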